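/- (Tightness of 3/2 for good swap edges) For every δ > 0 there exists a 2-edge-connected positively weighted graph G with source s, an SPT T, and a tree edge e such that the good swap edge g (minimizing d_T(s,x)+w(g) among swap edges (x,y) for e) satisfies μ(g)/μ(f) > 3/2 − δ, where f is a best swap edge for e under the max-stretch criterion. -/

import Mathlib

open SimpleGraph

/-- The weighted length of a walk. -/
noncomputable def wlen {V : Type*} (W : V → V → ℝ) {G : SimpleGraph V} {u v : V}
    (p : G.Walk u v) : ℝ :=
  (p.darts.map (fun d => W d.toProd.1 d.toProd.2)).sum

/-- The weighted distance between two vertices of a graph: the infimum of the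
weighted lengths of all walks joining them. -/
noncomputable def wdist {V : Type*} (W : V → V → ℝ) (G : SimpleGraph V) (u v : V) : ℝ :=
  sInf {x : ℝ | ∃ p : G.Walk u v, x = wlen W p}

/-- `(x, y)` is a swap edge for the failing tree edge `e = (a,b)` (with `b` the child):
a non-tree edge of `G` whose endpoint `x` lies in the component of `T − e` containing the
source and whose endpoint `y` lies in the detached component, i.e. the one containing `b`. -/
def swapEdge {V : Type*} (T G : SimpleGraph V) (a b x y : V) : Prop :=
  G.Adj x y ∧ Sym2.mk x y ∉ T.edgeSet ∧
    ¬ (T.deleteEdges {Sym2.mk a b}).Reachable b x ∧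
    (T.deleteEdges {Sym2.mk a b}).Reachable b y

/-- The max-stretch `μ` of a swap edge `(x, y)` for the failing edge `e = (a,b)`:
the supremum over the vertices `u` of the detached subtree `T_b` of
`d_{T_{e/f}}(s,u) / d_{G−e}(s,u)`, where `d_{T_{e/f}}(s,u) = d_T(s,x) + w(x,y) + d_T(y,u)`. -/
noncomputable def muSt {V : Type*} (W : V → V → ℝ) (T G : SimpleGraph V)
    (s a b x y : V) : ℝ :=
  sSup {r : ℝ | ∃ u : V, (T.deleteEdges {Sym2.mk a b}).Reachable b u ∧
    r = (wdist W T s x + W x y + wdist W T y u) /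
        wdist W (G.deleteEdges {Sym2.mk a b}) s u}

/-!
Let the source `0` hang by an edge of weight `ε` from the hub `1` of a star shortest-path tree
whose leaves `2` and `4` have edges of weight `1 - ε` and whose leaf `3` has one of weight `ε`,
and add the non-tree edges `0–2`, `0–3`, `0–4` of weight `1`. When the edge `0–1` fails these
are exactly the swap edges; they all leave the source and weigh `1`, so each of them is a good
swap edge. After the failure every vertex of the detached star is at distance at least `1` from
the source, and all of it lies within `1` of the leaf `3`, so swapping in `0–3` stretches by
at most `2` (attained at `2`). Swapping in `0–2` instead routes `4` along `0–2–1–4`, of length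
`3 - 2ε` against `1`, so `μ(g)/μ(f) ≥ (3 - 2ε)/2`.
-/

section WeightedDistance

variable {V : Type*} {W : V → V → ℝ} {G H : SimpleGraph V} {u v w : V}

@[simp] lemma wlen_nil : wlen W (Walk.nil : G.Walk u u) = 0 := by simp [wlen]

@[simp] lemma wlen_cons (h : G.Adj u v) (p : G.Walk v w) :
    wlen W (Walk.cons h p) = W u v + wlen W p := by simp [wlen]

@[simp] lemma wlen_mapLe (hGH : G ≤ H) (p : G.Walk u v) : wlen W (p.mapLe hGH) = wlen W p := by
  induction p with
  | nil => simp
  | cons h p ih => simp [ih]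

lemma wlen_nonneg (hW : ∀ a b, G.Adj a b → 0 ≤ W a b) (p : G.Walk u v) : 0 ≤ wlen W p := by
  induction p with
  | nil => simp
  | cons h p ih => rw [wlen_cons]; exact add_nonneg (hW _ _ h) ih

lemma wdist_nonneg (hW : ∀ a b, G.Adj a b → 0 ≤ W a b) (u v : V) : 0 ≤ wdist W G u v :=
  Real.sInf_nonneg (by rintro _ ⟨p, rfl⟩; exact wlen_nonneg hW p)

lemma wdist_le_wlen (hW : ∀ a b, G.Adj a b → 0 ≤ W a b) (p : G.Walk u v) :
    wdist W G u v ≤ wlen W p :=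
  csInf_le ⟨0, by rintro _ ⟨q, rfl⟩; exact wlen_nonneg hW q⟩ ⟨p, rfl⟩

lemma wdist_self (hW : ∀ a b, G.Adj a b → 0 ≤ W a b) (u : V) : wdist W G u u = 0 :=
  le_antisymm (by simpa using wdist_le_wlen hW (Walk.nil : G.Walk u u)) (wdist_nonneg hW u u)

lemma wdist_le_of_adj (hW : ∀ a b, G.Adj a b → 0 ≤ W a b) (h : G.Adj u v) :
    wdist W G u v ≤ W u v := by
  simpa using wdist_le_wlen hW (Walk.cons h Walk.nil)

lemma wdist_le_of_adj_of_adj (hW : ∀ a b, G.Adj a b → 0 ≤ W a b) (h : G.Adj u v)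
    (h' : G.Adj v w) : wdist W G u w ≤ W u v + W v w := by
  simpa using wdist_le_wlen hW (Walk.cons h (Walk.cons h' Walk.nil))

/-- Feasible potentials are the dual certificates that bound weighted distances from below. -/
def IsFeasiblePotential (W : V → V → ℝ) (G : SimpleGraph V) (φ : V → ℝ) : Prop :=
  ∀ a b, G.Adj a b → φ b ≤ φ a + W a b

namespace IsFeasiblePotential

variable {φ : V → ℝ}

lemma mono (hφ : IsFeasiblePotential W G φ) (hHG : H ≤ G) : IsFeasiblePotential W H φ :=
  fun a b hab => hφ a b (hHG hab)

lemma sub_le_wlen (hφ : IsFeasiblePotential W G φ) (p : G.Walk u v) : φ v - φ u ≤ wlen W p := by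
  induction p with
  | nil => simp
  | cons h p ih => rw [wlen_cons]; linarith [hφ _ _ h]

lemma sub_le_wdist (hφ : IsFeasiblePotential W G φ) (huv : G.Reachable u v) :
    φ v - φ u ≤ wdist W G u v :=
  let ⟨p⟩ := huv
  le_csInf ⟨_, p, rfl⟩ (by rintro _ ⟨q, rfl⟩; exact hφ.sub_le_wlen q)

lemma wdist_eq (hφ : IsFeasiblePotential W G φ) (p : G.Walk u v) (hp : wlen W p = φ v - φ u) :
    wdist W G u v = φ v - φ u :=
  le_antisymm (csInf_le ⟨φ v - φ u, by rintro _ ⟨q, rfl⟩; exact hφ.sub_le_wlen q⟩ ⟨p, hp.symm⟩)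
    (hφ.sub_le_wdist p.reachable)

lemma wdist_eq_wdist (hφ : IsFeasiblePotential W G φ) (hHG : H ≤ G) (p : H.Walk u v)
    (hp : wlen W p = φ v - φ u) : wdist W H u v = wdist W G u v := by
  rw [(hφ.mono hHG).wdist_eq p hp, hφ.wdist_eq (p.mapLe hHG) (by rw [wlen_mapLe, hp])]

end IsFeasiblePotential

lemma wdist_starGraph {r y z : V} (hW : ∀ a b, (starGraph r).Adj a b → 0 ≤ W a b)
    (hy : y ≠ r) (hz : z ≠ r) (hyz : y ≠ z) :
    wdist W (starGraph r) y z = W y r + W r z := by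
  classical
  let φ : V → ℝ := fun x => if x = y then 0 else W y r + if x = r then 0 else W r x
  have hφ : IsFeasiblePotential W (starGraph r) φ := by
    intro a b hab
    have hWab := hW a b hab
    have hWba := hW b a hab.symm
    obtain ⟨hne, rfl | rfl⟩ := starGraph_adj.1 hab
    · by_cases hb : b = y
      · subst hb; simp [φ, hy.symm]; linarith
      · simp [φ, hb, hne.symm, hy.symm]
    · by_cases ha : a = y
      · subst ha; simp [φ, hne.symm]
      · simp [φ, ha, hne, hy.symm]; linarith
  have hp := hφ.wdist_eq (Walk.cons (starGraph_center_adj' hy.symm)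
    (Walk.cons (starGraph_center_adj hz.symm) Walk.nil)) (by simp [φ, hz, hyz.symm])
  simpa [φ, hz, hyz.symm] using hp

end WeightedDistance

lemma SimpleGraph.not_isBridge_of_adj_of_adj {V : Type*} {G : SimpleGraph V} {u v w : V}
    (huw : G.Adj u w) (hwv : G.Adj w v) : ¬ G.IsBridge s(u, v) := by
  rw [isBridge_iff, not_not]
  have h₁ : (G.deleteEdges {s(u, v)}).Adj u w := by
    simp [huw, hwv.ne, huw.ne.symm]
  have h₂ : (G.deleteEdges {s(u, v)}).Adj w v := by
    simp [hwv, hwv.ne, huw.ne.symm]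
  exact h₁.reachable.trans h₂.reachable

lemma SimpleGraph.Connected.connected_delete_edge_of_forall_adj_common_neighbor {V : Type*}
    {G : SimpleGraph V} (hG : G.Connected) (htri : ∀ u v, G.Adj u v → ∃ w, G.Adj u w ∧ G.Adj w v) :
    ∀ e ∈ G.edgeSet, (G.deleteEdges {e}).Connected := by
  intro e he
  induction e using Sym2.ind with
  | _ u v =>
    obtain ⟨w, huw, hwv⟩ := htri u v he
    exact hG.connected_delete_edge_of_not_isBridge (not_isBridge_of_adj_of_adj huw hwv)

section MaxStretch

variable {V : Type*} {W : V → V → ℝ} {T G : SimpleGraph V} {s a b x y : V}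

lemma le_muSt [Finite V] {u : V} (hu : (T.deleteEdges {s(a, b)}).Reachable b u) :
    (wdist W T s x + W x y + wdist W T y u) / wdist W (G.deleteEdges {s(a, b)}) s u ≤
      muSt W T G s a b x y := by
  refine le_csSup (((Set.finite_range fun u => (wdist W T s x + W x y + wdist W T y u) /
    wdist W (G.deleteEdges {s(a, b)}) s u).subset ?_).bddAbove) ⟨u, hu, rfl⟩
  rintro _ ⟨u, -, rfl⟩
  exact ⟨u, rfl⟩

lemma muSt_le {M : ℝ} (h : ∀ u, (T.deleteEdges {s(a, b)}).Reachable b u →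
      (wdist W T s x + W x y + wdist W T y u) / wdist W (G.deleteEdges {s(a, b)}) s u ≤ M) :
    muSt W T G s a b x y ≤ M :=
  csSup_le ⟨_, b, Reachable.refl b, rfl⟩ (by rintro _ ⟨u, hu, rfl⟩; exact h u hu)

end MaxStretch

namespace GoodSwapTightness

abbrev graph : SimpleGraph (Fin 5) := starGraph 0 ⊔ starGraph 1

abbrev tree : SimpleGraph (Fin 5) := starGraph 1

def weight (ε : ℝ) : Fin 5 → Fin 5 → ℝ :=
  ![![0, ε, 1, 1, 1],
    ![ε, 0, 1 - ε, ε, 1 - ε],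
    ![1, 1 - ε, 0, 0, 0],
    ![1, ε, 0, 0, 0],
    ![1, 1 - ε, 0, 0, 0]]

lemma weight_symm (ε : ℝ) (u v : Fin 5) : weight ε u v = weight ε v u := by
  fin_cases u <;> fin_cases v <;> rfl

variable {ε : ℝ}

lemma weight_pos (hε₀ : 0 < ε) (hε : ε ≤ 1 / 2) (u v : Fin 5) (huv : graph.Adj u v) :
    0 < weight ε u v := by
  fin_cases u <;> fin_cases v <;> simp [weight] at huv ⊢ <;> linarith

lemma weight_nonneg (hε₀ : 0 < ε) (hε : ε ≤ 1 / 2) (H : SimpleGraph (Fin 5)) (hH : H ≤ graph)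
    (u v : Fin 5) (huv : H.Adj u v) : 0 ≤ weight ε u v :=
  (weight_pos hε₀ hε u v (hH huv)).le

lemma tree_le_graph : tree ≤ graph := le_sup_right

lemma graph_connected : graph.Connected :=
  (connected_starGraph 0).mono le_sup_left

lemma graph_deleteEdges_connected : ∀ e ∈ graph.edgeSet, (graph.deleteEdges {e}).Connected :=
  graph_connected.connected_delete_edge_of_forall_adj_common_neighbor (by decide)

lemma reachable_tree_deleteEdges_iff {u : Fin 5} :
    (tree.deleteEdges {s(0, 1)}).Reachable 1 u ↔ u ≠ 0 := by
  constructor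
  · rintro h rfl
    refine not_reachable_of_neighborSet_right_eq_empty (by decide) ?_ h
    ext v
    fin_cases v <;> simp
  · intro hu
    by_cases hu1 : u = 1
    · subst hu1; rfl
    · exact Adj.reachable (by fin_cases u <;> simp_all)

lemma swapEdge_iff {x y : Fin 5} :
    swapEdge tree graph 0 1 x y ↔ x = 0 ∧ (y = 2 ∨ y = 3 ∨ y = 4) := by
  rw [swapEdge, reachable_tree_deleteEdges_iff, reachable_tree_deleteEdges_iff, mem_edgeSet]
  revert x y
  decide

lemma wdist_tree_eq_wdist_graph (hε₀ : 0 < ε) (hε : ε ≤ 1 / 2) (u : Fin 5) :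
    wdist (weight ε) tree 0 u = wdist (weight ε) graph 0 u := by
  have hφ : IsFeasiblePotential (weight ε) graph ![0, ε, 1, 2 * ε, 1] := by
    intro a b hab
    fin_cases a <;> fin_cases b <;> simp [weight] at hab ⊢ <;> linarith
  have h01 : tree.Adj 0 1 := by decide
  fin_cases u
  · exact hφ.wdist_eq_wdist tree_le_graph Walk.nil (by simp)
  · exact hφ.wdist_eq_wdist tree_le_graph (Walk.cons h01 Walk.nil) (by simp [weight])
  all_goals
    exact hφ.wdist_eq_wdist tree_le_graph (Walk.cons h01 (Walk.cons (by decide) Walk.nil))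
      (by simp [weight, two_mul])

lemma one_le_wdist_deleteEdges (hε₀ : 0 < ε) (hε : ε ≤ 1 / 2) {u : Fin 5} (hu : u ≠ 0) :
    1 ≤ wdist (weight ε) (graph.deleteEdges {s(0, 1)}) 0 u := by
  have hφ : IsFeasiblePotential (weight ε) (graph.deleteEdges {s(0, 1)})
      fun v => if v = 0 then 0 else 1 := by
    intro a b hab
    fin_cases a <;> fin_cases b <;> simp [weight] at hab ⊢ <;> linarith
  simpa [hu] using
    hφ.sub_le_wdist ((graph_deleteEdges_connected _ (by decide)).preconnected 0 u)

lemma wdist_deleteEdges_eq_one (hε₀ : 0 < ε) (hε : ε ≤ 1 / 2) {u : Fin 5}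
    (hu : u = 2 ∨ u = 3 ∨ u = 4) : wdist (weight ε) (graph.deleteEdges {s(0, 1)}) 0 u = 1 := by
  refine le_antisymm ?_ (one_le_wdist_deleteEdges hε₀ hε (by omega))
  rcases hu with rfl | rfl | rfl <;>
    exact (wdist_le_of_adj (weight_nonneg hε₀ hε _ (deleteEdges_le _)) (by simp)).trans_eq
      (by simp [weight])

lemma wdist_tree_three_le_one (hε₀ : 0 < ε) (hε : ε ≤ 1 / 2) (u : Fin 5) :
    wdist (weight ε) tree 3 u ≤ 1 := by
  have hW := weight_nonneg hε₀ hε tree tree_le_graph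
  have h31 : tree.Adj 3 1 := by decide
  fin_cases u
  · exact (wdist_le_of_adj_of_adj hW h31 (by decide)).trans (by simp [weight]; linarith)
  · exact (wdist_le_of_adj hW h31).trans (by simp [weight]; linarith)
  · exact (wdist_le_of_adj_of_adj hW h31 (by decide)).trans (by simp [weight])
  · simp [wdist_self hW]
  · exact (wdist_le_of_adj_of_adj hW h31 (by decide)).trans (by simp [weight])

lemma muSt_zero_three_eq_two (hε₀ : 0 < ε) (hε : ε ≤ 1 / 2) :
    muSt (weight ε) tree graph 0 0 1 0 3 = 2 := by
  have hW := weight_nonneg hε₀ hε tree tree_le_graph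
  apply le_antisymm
  · refine muSt_le fun u hu => ?_
    have hden := one_le_wdist_deleteEdges hε₀ hε (reachable_tree_deleteEdges_iff.1 hu)
    rw [wdist_self hW, show weight ε 0 3 = 1 from rfl, div_le_iff₀ (by linarith)]
    linarith [wdist_tree_three_le_one hε₀ hε u]
  · calc (2 : ℝ)
        = (wdist (weight ε) tree 0 0 + weight ε 0 3 + wdist (weight ε) tree 3 2) /
            wdist (weight ε) (graph.deleteEdges {s(0, 1)}) 0 2 := by
          rw [wdist_self hW, wdist_starGraph hW (by decide) (by decide) (by decide),
            wdist_deleteEdges_eq_one hε₀ hε (by simp)]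
          simp [weight]
          ring
      _ ≤ muSt (weight ε) tree graph 0 0 1 0 3 :=
        le_muSt (reachable_tree_deleteEdges_iff.2 (by decide))

lemma three_sub_two_mul_le_muSt (hε₀ : 0 < ε) (hε : ε ≤ 1 / 2) {y z : Fin 5}
    (hy : y = 2 ∨ y = 4) (hz : z = 2 ∨ z = 4) (hyz : y ≠ z) :
    3 - 2 * ε ≤ muSt (weight ε) tree graph 0 0 1 0 y := by
  have hW := weight_nonneg hε₀ hε tree tree_le_graph
  calc 3 - 2 * ε
      = (wdist (weight ε) tree 0 0 + weight ε 0 y + wdist (weight ε) tree y z) /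
          wdist (weight ε) (graph.deleteEdges {s(0, 1)}) 0 z := by
        rw [wdist_self hW, wdist_starGraph hW (by omega) (by omega) hyz,
          wdist_deleteEdges_eq_one hε₀ hε (by omega)]
        rcases hy with rfl | rfl <;> rcases hz with rfl | rfl <;> simp_all [weight] <;> ring
    _ ≤ muSt (weight ε) tree graph 0 0 1 0 y :=
      le_muSt (reachable_tree_deleteEdges_iff.2 (by omega))

end GoodSwapTightness

/-- Tightness of the 3/2 approximation for good swap edges.  For every `δ > 0` there exists
a 2-edge-connected positively weighted graph `G` with source `s`, an SPT `T`, and a tree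
edge `e = (a,b)` such that the good swap edge `g = (xg,yg)` (minimizing `d_T(s,x)+w(g)`
among swap edges for `e`) and a best swap edge `f = (xf,yf)` for `e` under the max-stretch
criterion satisfy `μ(g)/μ(f) > 3/2 − δ`. -/
theorem good_swap_edge_ratio_tight (δ : ℝ) (hδ : 0 < δ) :
    ∃ (V : Type) (_ : Fintype V) (G T : SimpleGraph V) (W : V → V → ℝ)
      (s a b xg yg xf yf : V),
      (∀ u v : V, G.Adj u v → 0 < W u v) ∧ (∀ u v : V, W u v = W v u) ∧
      G.Connected ∧ (∀ e' ∈ G.edgeSet, (G.deleteEdges {e'}).Connected) ∧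
      T ≤ G ∧ T.IsTree ∧ (∀ u : V, wdist W T s u = wdist W G s u) ∧
      Sym2.mk a b ∈ T.edgeSet ∧
      ¬ (T.deleteEdges {Sym2.mk a b}).Reachable s b ∧
      swapEdge T G a b xg yg ∧
      (∀ x' v' : V, swapEdge T G a b x' v' →
        wdist W T s xg + W xg yg ≤ wdist W T s x' + W x' v') ∧
      swapEdge T G a b xf yf ∧
      (∀ x' v' : V, swapEdge T G a b x' v' →
        muSt W T G s a b xf yf ≤ muSt W T G s a b x' v') ∧
      0 < muSt W T G s a b xf yf ∧
      muSt W T G s a b xg yg / muSt W T G s a b xf yf > 3 / 2 - δ := by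
  open GoodSwapTightness in
  obtain ⟨ε, hε₀, hε, hεδ⟩ : ∃ ε : ℝ, 0 < ε ∧ ε ≤ 1 / 2 ∧ ε < δ :=
    ⟨min δ 1 / 2, by positivity, by linarith [min_le_right δ 1], by linarith [min_le_left δ 1]⟩
  have hf := muSt_zero_three_eq_two hε₀ hε
  have hg := three_sub_two_mul_le_muSt hε₀ hε (y := 2) (z := 4) (by simp) (by simp) (by decide)
  have hh := three_sub_two_mul_le_muSt hε₀ hε (y := 4) (z := 2) (by simp) (by simp) (by decide)
  refine ⟨Fin 5, inferInstance, graph, tree, weight ε, 0, 0, 1, 0, 2, 0, 3,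
    weight_pos hε₀ hε, weight_symm ε, graph_connected, graph_deleteEdges_connected, tree_le_graph,
    isTree_starGraph 1, wdist_tree_eq_wdist_graph hε₀ hε, by simp,
    fun h => reachable_tree_deleteEdges_iff.1 h.symm rfl, swapEdge_iff.2 ⟨rfl, by simp⟩, ?_,
    swapEdge_iff.2 ⟨rfl, by simp⟩, ?_, by rw [hf]; norm_num, ?_⟩
  · rintro x y hxy
    obtain ⟨rfl, hy⟩ := swapEdge_iff.1 hxy
    rcases hy with rfl | rfl | rfl <;> simp [weight]
  · rintro x y hxy
    obtain ⟨rfl, hy⟩ := swapEdge_iff.1 hxy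
    rcases hy with rfl | rfl | rfl <;> linarith
  · rw [hf, gt_iff_lt, lt_div_iff₀ two_pos]
    linarith
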